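/- Let k ≥ 3 and r ≥ 1 be integers. A real number λ is an eigenvalue of the adjacency matrix of \widehat{X_r^k} if and only if λ is a root of R^k_s for some s with 2 ≤ s ≤ r+1, or λ is a root of Q^k_{r+1}. -/

import Mathlib

open Polynomial

/-- Vertices of the rooted tree of depth `r` in which each vertex at depth `i < r`
has `b i` children: a vertex is a word assigning to each position `i < m ≤ r`
a letter in `Fin (b i)`; the empty word (`m = 0`) is the root, and the depth of a
vertex is its length `m`. -/
abbrev BVertex (b : ℕ → ℕ) (r : ℕ) := Σ m : Fin (r + 1), (i : Fin (m : ℕ)) → Fin (b i)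

/-- `y` is a child of `x`: the word `y` extends the word `x` by one letter. -/
def BExt {b : ℕ → ℕ} {r : ℕ} (x y : BVertex b r) : Prop :=
  ∃ h : (y.1 : ℕ) = (x.1 : ℕ) + 1,
    ∀ i : Fin (x.1 : ℕ), y.2 ⟨(i : ℕ), by have := i.isLt; omega⟩ = x.2 i

/-- Adjacency in the rooted tree: the parent/child relation. -/
def BAdj {b : ℕ → ℕ} {r : ℕ} (x y : BVertex b r) : Prop := BExt x y ∨ BExt y x

open Classical in
/-- Adjacency matrix of the rooted tree with branching sequence `b` and depth `r`. -/
noncomputable def BAdjMatrix (b : ℕ → ℕ) (r : ℕ) : Matrix (BVertex b r) (BVertex b r) ℝ :=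
  fun x y => if BAdj x y then 1 else 0

/-- `lam` is an eigenvalue of the adjacency matrix of the tree. -/
def IsAdjEigenvalue (b : ℕ → ℕ) (r : ℕ) (lam : ℝ) : Prop :=
  ∃ v : BVertex b r → ℝ, v ≠ 0 ∧ (BAdjMatrix b r).mulVec v = lam • v

/-- Dimension of the `lam`-eigenspace of the adjacency matrix of the tree. -/
noncomputable def adjEigDim (b : ℕ → ℕ) (r : ℕ) (lam : ℝ) : ℕ :=
  Module.finrank ℝ
    (LinearMap.ker ((BAdjMatrix b r).mulVecLin - lam • LinearMap.id))

/-- Branching sequence of the tree `\widehat{X_r^k}`: the root has `k` children and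
every other non-leaf vertex has `k − 1` children. -/
def hatB (k : ℕ) : ℕ → ℕ := fun i => if i = 0 then k else k - 1

/-- The polynomials `R^k_n`: `R^k_0 = 0`, `R^k_1 = 1`,
`R^k_n = x·R^k_{n-1} − (k−1)·R^k_{n-2}`. -/
noncomputable def Rpoly (k : ℕ) : ℕ → Polynomial ℝ
  | 0 => 0
  | 1 => 1
  | n + 2 => X * Rpoly k (n + 1) - C ((k : ℝ) - 1) * Rpoly k n

/-- The polynomials `Q^k_n = x·R^k_n − k·R^k_{n-1}`. -/
noncomputable def Qpoly (k : ℕ) (n : ℕ) : Polynomial ℝ :=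
  X * Rpoly k n - C (k : ℝ) * Rpoly k (n - 1)

namespace HatAux

variable {b : ℕ → ℕ} {r : ℕ}

/-- the `j`-th letter of `x`, as a natural number (0 if out of range). -/
def letter (j : ℕ) (x : BVertex b r) : ℕ :=
  if hz : j < (x.1 : ℕ) then (x.2 ⟨j, hz⟩ : ℕ) else 0

lemma bvertex_ext {x y : BVertex b r} (h1 : (x.1 : ℕ) = (y.1 : ℕ))
    (h2 : ∀ j : ℕ, letter j x = letter j y) : x = y := by
  obtain ⟨⟨m, hm⟩, f⟩ := x
  obtain ⟨⟨n, hn⟩, g⟩ := y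
  simp only [Fin.val_mk] at h1
  subst h1
  have : f = g := by
    funext i
    have h := h2 (i : ℕ)
    simp only [letter, Fin.val_mk, i.isLt, dif_pos] at h
    exact Fin.ext h
  subst this
  rfl

def extend (x : BVertex b r) (h : (x.1 : ℕ) < r) (c : Fin (b (x.1 : ℕ))) : BVertex b r :=
  ⟨⟨(x.1 : ℕ) + 1, by omega⟩, fun i =>
    if hi : (i : ℕ) < (x.1 : ℕ) then x.2 ⟨i, hi⟩
    else Fin.cast (congrArg b (by have := i.isLt; simp only [Fin.val_mk] at this; omega)) c⟩

@[simp] lemma depth_extend (x : BVertex b r) (h : (x.1 : ℕ) < r) (c : Fin (b (x.1 : ℕ))) :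
    ((extend x h c).1 : ℕ) = (x.1 : ℕ) + 1 := rfl

lemma letter_extend (x : BVertex b r) (h : (x.1 : ℕ) < r) (c : Fin (b (x.1 : ℕ))) (j : ℕ) :
    letter j (extend x h c) =
      if j < (x.1 : ℕ) then letter j x else if j = (x.1 : ℕ) then (c : ℕ) else 0 := by
  unfold letter extend
  by_cases h1 : j < (x.1 : ℕ) + 1
  · rw [dif_pos h1]
    by_cases h2 : j < (x.1 : ℕ)
    · simp only [Fin.val_mk, h2, dif_pos, if_true, if_pos h2]
    · have h3 : j = (x.1 : ℕ) := by omega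
      simp only [Fin.val_mk, h2, dif_neg, if_neg h2, if_pos h3, Fin.coe_cast]
      simp
  · have h2 : ¬ j < (x.1 : ℕ) := by omega
    have h3 : j ≠ (x.1 : ℕ) := by omega
    rw [dif_neg h1, if_neg h2, if_neg h3]

def par (x : BVertex b r) : BVertex b r :=
  ⟨⟨(x.1 : ℕ) - 1, by have := x.1.isLt; omega⟩,
    fun i => x.2 ⟨i, by have := i.isLt; simp only [Fin.val_mk] at this; omega⟩⟩

@[simp] lemma depth_par (x : BVertex b r) : ((par x).1 : ℕ) = (x.1 : ℕ) - 1 := rfl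

lemma letter_par (x : BVertex b r) (j : ℕ) :
    letter j (par x) = if j < (x.1 : ℕ) - 1 then letter j x else 0 := by
  unfold letter par
  by_cases h1 : j < (x.1 : ℕ) - 1
  · have h2 : j < (x.1 : ℕ) := by omega
    simp only [Fin.val_mk, h1, dif_pos, if_pos h1, h2, if_true]
  · rw [dif_neg (by simpa using h1), if_neg h1]

lemma par_extend (x : BVertex b r) (h : (x.1 : ℕ) < r) (c : Fin (b (x.1 : ℕ))) :
    par (extend x h c) = x := by
  apply bvertex_ext (by simp)
  intro j
  rw [letter_par, letter_extend]
  simp only [depth_extend, Nat.add_sub_cancel]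
  by_cases h1 : j < (x.1 : ℕ)
  · simp [h1]
  · simp [h1, letter, h1]

lemma bext_extend (x : BVertex b r) (h : (x.1 : ℕ) < r) (c : Fin (b (x.1 : ℕ))) :
    BExt x (extend x h c) := by
  refine ⟨rfl, fun i => ?_⟩
  show dite _ _ _ = _
  rw [dif_pos i.isLt]

lemma bext_iff_extend {x y : BVertex b r} :
    BExt x y ↔ ∃ (h : (x.1 : ℕ) < r) (c : Fin (b (x.1 : ℕ))), y = extend x h c := by
  constructor
  · rintro ⟨hd, hp⟩
    have hxr : (x.1 : ℕ) < r := by have := y.1.isLt; omega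
    refine ⟨hxr, y.2 ⟨(x.1 : ℕ), by omega⟩, ?_⟩
    apply bvertex_ext (by simp [hd])
    intro j
    rw [letter_extend]
    by_cases h1 : j < (x.1 : ℕ)
    · rw [if_pos h1]
      unfold letter
      rw [dif_pos (by omega), dif_pos h1]
      exact congrArg Fin.val (hp ⟨j, h1⟩)
    · by_cases h2 : j = (x.1 : ℕ)
      · subst h2
        rw [if_neg h1, if_pos rfl]
        unfold letter
        rw [dif_pos (by omega)]
      · rw [if_neg h1, if_neg h2]
        unfold letter
        rw [dif_neg (by omega)]
  · rintro ⟨h, c, rfl⟩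
    exact bext_extend x h c

lemma bext_iff_par {x y : BVertex b r} :
    BExt y x ↔ 1 ≤ (x.1 : ℕ) ∧ y = par x := by
  constructor
  · rintro ⟨hd, hp⟩
    refine ⟨by omega, ?_⟩
    apply bvertex_ext (by simp; omega)
    intro j
    rw [letter_par]
    by_cases h1 : j < (x.1 : ℕ) - 1
    · rw [if_pos h1]
      unfold letter
      rw [dif_pos (by omega), dif_pos (by omega)]
      exact (congrArg Fin.val (hp ⟨j, by omega⟩)).symm
    · rw [if_neg h1]
      unfold letter
      rw [dif_neg (by omega)]
  · rintro ⟨h1, rfl⟩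
    refine ⟨by simp; omega, fun i => ?_⟩
    rfl

lemma extend_inj {x : BVertex b r} {h : (x.1 : ℕ) < r} {c c' : Fin (b (x.1 : ℕ))}
    (he : extend x h c = extend x h c') : c = c' := by
  have := congrArg (letter (x.1 : ℕ)) he
  rw [letter_extend, letter_extend] at this
  simp only [lt_irrefl, if_neg, if_pos rfl] at this
  exact Fin.ext (by simpa using this)

lemma mulVec_apply (v : BVertex b r → ℝ) (x : BVertex b r) :
    (BAdjMatrix b r).mulVec v x =
      (if 1 ≤ (x.1 : ℕ) then v (par x) else 0) +
      (if h : (x.1 : ℕ) < r then ∑ c : Fin (b (x.1 : ℕ)), v (extend x h c) else 0) := by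
  classical
  have step1 : (BAdjMatrix b r).mulVec v x
      = ∑ y : BVertex b r, ((if BExt y x then v y else 0) + (if BExt x y then v y else 0)) := by
    rw [Matrix.mulVec]
    apply Finset.sum_congr rfl
    intro y _
    by_cases h1 : BExt x y <;> by_cases h2 : BExt y x
    · exfalso
      obtain ⟨e1, -⟩ := h1; obtain ⟨e2, -⟩ := h2; omega
    all_goals simp [BAdjMatrix, BAdj, dotProduct, h1, h2]
  rw [step1, Finset.sum_add_distrib]
  congr 1
  · by_cases hx : 1 ≤ (x.1 : ℕ)
    · rw [if_pos hx]
      have : ∀ y : BVertex b r, BExt y x ↔ y = par x := by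
        intro y; rw [bext_iff_par]; simp [hx]
      simp only [this]
      simp
    · rw [if_neg hx]
      apply Finset.sum_eq_zero
      intro y _
      rw [if_neg]
      intro hc
      exact hx (bext_iff_par.mp hc).1
  · by_cases h : (x.1 : ℕ) < r
    · rw [dif_pos h]
      have rhs : ∀ c : Fin (b (x.1 : ℕ)), v (extend x h c)
          = ∑ y : BVertex b r, (if y = extend x h c then v y else 0) := by
        intro c; simp
      simp only [rhs]
      rw [Finset.sum_comm]
      apply Finset.sum_congr rfl
      intro y _
      by_cases hy : BExt x y
      · rw [if_pos hy]
        obtain ⟨h', c0, rfl⟩ := bext_iff_extend.mp hy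
        have key : ∀ c : Fin (b (x.1 : ℕ)), (extend x h' c0 = extend x h c) ↔ c = c0 := by
          intro c
          constructor
          · intro he; exact (extend_inj he.symm)
          · rintro rfl; rfl
        simp only [key]
        simp
      · rw [if_neg hy]
        symm
        apply Finset.sum_eq_zero
        intro c _
        rw [if_neg]
        intro hc
        exact hy (hc ▸ bext_iff_extend.mpr ⟨h, c, rfl⟩)
    · rw [dif_neg h]
      apply Finset.sum_eq_zero
      intro y _
      rw [if_neg]
      intro hc
      obtain ⟨h', -⟩ := bext_iff_extend.mp hc
      exact h h'

/-! ### Evaluated polynomials -/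

noncomputable def Rv (k : ℕ) (lam : ℝ) (n : ℕ) : ℝ := (Rpoly k n).eval lam

@[simp] lemma Rv_zero {k : ℕ} {lam : ℝ} : Rv k lam 0 = 0 := by simp [Rv, Rpoly]

@[simp] lemma Rv_one {k : ℕ} {lam : ℝ} : Rv k lam 1 = 1 := by simp [Rv, Rpoly]

lemma Rv_rec {k : ℕ} {lam : ℝ} (n : ℕ) :
    Rv k lam (n + 2) = lam * Rv k lam (n + 1) - ((k : ℝ) - 1) * Rv k lam n := by
  simp [Rv, Rpoly]

lemma Rv_two {k : ℕ} {lam : ℝ} : Rv k lam 2 = lam := by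
  rw [Rv_rec 0]; simp

lemma Qv {k n : ℕ} {lam : ℝ} (hn : 1 ≤ n) :
    (Qpoly k n).eval lam = lam * Rv k lam n - (k : ℝ) * Rv k lam (n - 1) := by
  simp [Qpoly, Rv]

/-! ### hatB facts -/

lemma hatB_pos {k : ℕ} (hk : 3 ≤ k) (i : ℕ) : 0 < hatB k i := by
  unfold hatB; split <;> omega

lemma hatB_ge_two {k : ℕ} (hk : 3 ≤ k) (i : ℕ) : 2 ≤ hatB k i := by
  unfold hatB; split <;> omega

lemma hatB_zero {k : ℕ} : hatB k 0 = k := rfl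

lemma hatB_of_pos {k i : ℕ} (hi : 1 ≤ i) : hatB k i = k - 1 := by
  unfold hatB; rw [if_neg (by omega)]

/-! ### eigenvector equations -/

section Eigen

variable {k : ℕ} {lam : ℝ} {v : BVertex (hatB k) r → ℝ}

lemma eqn (hv : (BAdjMatrix (hatB k) r).mulVec v = lam • v) (x : BVertex (hatB k) r) :
    (if 1 ≤ (x.1 : ℕ) then v (par x) else 0) +
      (if h : (x.1 : ℕ) < r then ∑ c : Fin (hatB k (x.1 : ℕ)), v (extend x h c) else 0)
      = lam * v x := by
  have := congrFun hv x
  rw [mulVec_apply] at this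
  simpa using this

lemma key (hk : 3 ≤ k) (hv : (BAdjMatrix (hatB k) r).mulVec v = lam • v) :
    ∀ t : ℕ, ∀ x : BVertex (hatB k) r, (x.1 : ℕ) + t = r → 1 ≤ (x.1 : ℕ) →
      Rv k lam (t + 1) * v (par x) = Rv k lam (t + 2) * v x := by
  intro t
  induction t with
  | zero =>
    intro x hd h1
    have e := eqn hv x
    rw [if_pos h1, dif_neg (by omega)] at e
    rw [Rv_one, Rv_two, one_mul]
    linarith
  | succ t ih =>
    intro x hd h1
    have hlt : (x.1 : ℕ) < r := by omega
    have e := eqn hv x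
    rw [if_pos h1, dif_pos hlt] at e
    have hc : ∀ c : Fin (hatB k (x.1 : ℕ)),
        Rv k lam (t + 2) * v (extend x hlt c) = Rv k lam (t + 1) * v x := by
      intro c
      have h2 := ih (extend x hlt c) (by simp; omega) (by simp)
      rw [par_extend] at h2
      linarith
    have hcard : ((Finset.univ : Finset (Fin (hatB k (x.1 : ℕ)))).card : ℝ) = (k : ℝ) - 1 := by
      rw [Finset.card_univ, Fintype.card_fin, hatB_of_pos h1]
      push_cast [Nat.cast_sub (by omega : 1 ≤ k)]
      ring
    have hsum : Rv k lam (t + 2) * (∑ c : Fin (hatB k (x.1 : ℕ)), v (extend x hlt c))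
        = ((k : ℝ) - 1) * (Rv k lam (t + 1) * v x) := by
      rw [Finset.mul_sum, Finset.sum_congr rfl (fun c _ => hc c), Finset.sum_const,
        nsmul_eq_mul, hcard]
    have e' : v (par x) = lam * v x - (∑ c : Fin (hatB k (x.1 : ℕ)), v (extend x hlt c)) := by
      linarith
    calc Rv k lam (t + 2) * v (par x)
        = lam * (Rv k lam (t + 2) * v x)
          - Rv k lam (t + 2) * (∑ c : Fin (hatB k (x.1 : ℕ)), v (extend x hlt c)) := by
          rw [e']; ring
      _ = lam * (Rv k lam (t + 2) * v x) - ((k : ℝ) - 1) * (Rv k lam (t + 1) * v x) := by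
          rw [hsum]
      _ = Rv k lam (t + 3) * v x := by rw [Rv_rec (t + 1)]; ring

lemma vanish (hk : 3 ≤ k) (hr : 1 ≤ r) (hv : (BAdjMatrix (hatB k) r).mulVec v = lam • v)
    (hR : ∀ s : ℕ, 2 ≤ s → s ≤ r + 1 → Rv k lam s ≠ 0)
    (hQ : lam * Rv k lam (r + 1) - (k : ℝ) * Rv k lam r ≠ 0) :
    ∀ x : BVertex (hatB k) r, v x = 0 := by
  suffices h : ∀ m : ℕ, ∀ x : BVertex (hatB k) r, (x.1 : ℕ) = m → v x = 0 by
    intro x; exact h (x.1 : ℕ) x rfl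
  intro m
  induction m using Nat.strong_induction_on with
  | _ m ih =>
    intro x hd
    match m, hd with
    | 0, hd =>
      have hlt0 : (x.1 : ℕ) < r := by omega
      have e := eqn hv x
      rw [if_neg (by omega), dif_pos hlt0, zero_add] at e
      have hc : ∀ c : Fin (hatB k (x.1 : ℕ)),
          Rv k lam (r + 1) * v (extend x hlt0 c) = Rv k lam r * v x := by
        intro c
        have h2 := key hk hv (r - 1) (extend x hlt0 c) (by simp [hd]; omega) (by simp)
        rw [par_extend] at h2
        have e1 : r - 1 + 1 = r := by omega
        have e2 : r - 1 + 2 = r + 1 := by omega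
        rw [e1, e2] at h2
        linarith
      have hcard : ((Finset.univ : Finset (Fin (hatB k (x.1 : ℕ)))).card : ℝ) = (k : ℝ) := by
        rw [Finset.card_univ, Fintype.card_fin, hd, hatB_zero]
      have hsum : Rv k lam (r + 1) * (∑ c : Fin (hatB k (x.1 : ℕ)), v (extend x hlt0 c))
          = (k : ℝ) * (Rv k lam r * v x) := by
        rw [Finset.mul_sum, Finset.sum_congr rfl (fun c _ => hc c), Finset.sum_const,
          nsmul_eq_mul, hcard]
      have : (lam * Rv k lam (r + 1) - (k : ℝ) * Rv k lam r) * v x = 0 := by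
        have := congrArg (fun z => Rv k lam (r + 1) * z) e
        rw [hsum] at this
        ring_nf
        ring_nf at this
        linarith
      exact (mul_eq_zero.mp this).resolve_left hQ
    | m + 1, hd =>
      have hm : m + 1 ≤ r := by have := x.1.isLt; omega
      have h2 := key hk hv (r - (m + 1)) x (by omega) (by omega)
      have hp : v (par x) = 0 := ih m (by omega) (par x) (by simp [hd])
      rw [hp, mul_zero] at h2
      have e2 : r - (m + 1) + 2 = r - m + 1 := by omega
      rw [e2] at h2
      have hs := hR (r - m + 1) (by omega) (by omega)
      exact (mul_eq_zero.mp h2.symm).resolve_left hs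

end Eigen

/-! ### construction helpers -/

def allZero {k : ℕ} (hk : 3 ≤ k) (r : ℕ) (m : ℕ) (hm : m ≤ r) : BVertex (hatB k) r :=
  ⟨⟨m, by omega⟩, fun i => ⟨0, hatB_pos hk _⟩⟩

@[simp] lemma depth_allZero {k : ℕ} (hk : 3 ≤ k) (r m : ℕ) (hm : m ≤ r) :
    (((allZero hk r m hm).1 : ℕ)) = m := rfl

lemma letter_allZero {k : ℕ} (hk : 3 ≤ k) (r m : ℕ) (hm : m ≤ r) (j : ℕ) :
    letter j (allZero hk r m hm) = 0 := by
  unfold letter allZero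
  split <;> rfl

noncomputable def sgn : ℕ → ℝ := fun c => if c = 0 then 1 else if c = 1 then -1 else 0

lemma sgn_sum {n : ℕ} (hn : 2 ≤ n) : ∑ c : Fin n, sgn (c : ℕ) = 0 := by
  rw [Fin.sum_univ_eq_sum_range]
  induction n with
  | zero => omega
  | succ n ih =>
    rcases Nat.lt_or_ge n 2 with h | h
    · have : n = 1 := by omega
      subst this
      simp [Finset.sum_range_succ, sgn]
    · rw [Finset.sum_range_succ, ih h]
      have : sgn n = 0 := by
        unfold sgn
        rw [if_neg (by omega), if_neg (by omega)]
      rw [this, add_zero]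

end HatAux

open HatAux in
theorem hat_adj_spectrum (k r : ℕ) (hk : 3 ≤ k) (hr : 1 ≤ r) (lam : ℝ) :
    IsAdjEigenvalue (hatB k) r lam ↔
      (∃ s : ℕ, 2 ≤ s ∧ s ≤ r + 1 ∧ (Rpoly k s).IsRoot lam) ∨
        (Qpoly k (r + 1)).IsRoot lam := by
  constructor
  · rintro ⟨v, hv0, hv⟩
    by_contra hcon
    push_neg at hcon
    obtain ⟨hR, hQ⟩ := hcon
    have hR' : ∀ s : ℕ, 2 ≤ s → s ≤ r + 1 → Rv k lam s ≠ 0 := by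
      intro s h1 h2
      exact hR s h1 h2
    have hQ' : lam * Rv k lam (r + 1) - (k : ℝ) * Rv k lam r ≠ 0 := by
      intro h
      apply hQ
      rw [Polynomial.IsRoot, Qv (by omega)]
      simpa using h
    exact hv0 (funext (vanish hk hr hv hR' hQ'))
  · rintro (⟨s, hs2, hsr, hs⟩ | hQ)
    · -- difference eigenvector supported below a vertex at depth j := r + 1 - s
      classical
      have hs' : Rv k lam s = 0 := hs
      set j := r + 1 - s with hjdef
      have hsj : s = r + 1 - j := by omega
      have hjr : j < r := by omega
      set coef : BVertex (hatB k) r → ℝ := fun x =>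
        if j < (x.1 : ℕ) ∧ (∀ i, i < j → letter i x = 0) then sgn (letter j x) else 0
        with hcoef
      have coef_zero : ∀ x : BVertex (hatB k) r, ¬ j < (x.1 : ℕ) → coef x = 0 := by
        intro x h
        simp only [hcoef]
        exact if_neg (by tauto)
      have coef_congr : ∀ x y : BVertex (hatB k) r, j < (x.1 : ℕ) → j < (y.1 : ℕ) →
          (∀ i, i ≤ j → letter i x = letter i y) → coef x = coef y := by
        intro x y hx hy hl
        simp only [hcoef, hx, hy, true_and]
        have hiff : (∀ i, i < j → letter i x = 0) ↔ (∀ i, i < j → letter i y = 0) := by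
          constructor <;> intro h i hi
          · rw [← hl i (le_of_lt hi)]; exact h i hi
          · rw [hl i (le_of_lt hi)]; exact h i hi
        rw [hl j le_rfl]
        by_cases hp : ∀ i, i < j → letter i y = 0
        · rw [if_pos (hiff.mpr hp), if_pos hp]
        · rw [if_neg (fun hh => hp (hiff.mp hh)), if_neg hp]
      have coef_par : ∀ x : BVertex (hatB k) r, j + 1 < (x.1 : ℕ) →
          coef (par x) = coef x := by
        intro x hx
        apply coef_congr _ _ (by simp; omega) (by omega)
        intro i hi
        rw [letter_par, if_pos (by omega)]
      have coef_ext : ∀ (x : BVertex (hatB k) r) (h : (x.1 : ℕ) < r) (c : Fin (hatB k (x.1 : ℕ))),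
          j < (x.1 : ℕ) → coef (extend x h c) = coef x := by
        intro x h c hx
        apply coef_congr _ _ (by simp; omega) hx
        intro i hi
        rw [letter_extend, if_pos (by omega)]
      have coef_ext_mid : ∀ (x : BVertex (hatB k) r) (h : (x.1 : ℕ) < r)
          (c : Fin (hatB k (x.1 : ℕ))), (x.1 : ℕ) = j →
          coef (extend x h c) =
            (if (∀ i, i < j → letter i x = 0) then sgn (c : ℕ) else 0) := by
        intro x h c hxj
        have hl : ∀ i, i < j → letter i (extend x h c) = letter i x := by
          intro i hi
          rw [letter_extend, if_pos (by omega)]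
        have hlj : letter j (extend x h c) = (c : ℕ) := by
          rw [letter_extend, if_neg (by omega), if_pos (by omega)]
        simp only [hcoef]
        by_cases hp : ∀ i, i < j → letter i x = 0
        · rw [if_pos ⟨by simp [hxj], fun i hi => by rw [hl i hi]; exact hp i hi⟩, hlj,
            if_pos hp]
        · rw [if_neg, if_neg hp]
          rintro ⟨-, hh⟩
          exact hp (fun i hi => by rw [← hl i hi]; exact hh i hi)
      refine ⟨fun x => coef x * Rv k lam (r + 1 - (x.1 : ℕ)), ?_, ?_⟩
      · intro h0
        have h1 := congrFun h0 (allZero hk r r le_rfl)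
        simp only [Pi.zero_apply, depth_allZero] at h1
        have hc1 : coef (allZero hk r r le_rfl) = 1 := by
          simp only [hcoef]
          rw [if_pos ⟨by simp [depth_allZero]; omega,
              fun i _ => letter_allZero hk r r le_rfl i⟩,
            letter_allZero]
          simp [sgn]
        rw [hc1, one_mul, show r + 1 - r = 1 by omega, Rv_one] at h1
        exact one_ne_zero h1
      · funext x
        rw [mulVec_apply]
        simp only [Pi.smul_apply, smul_eq_mul, depth_par, depth_extend]
        have hxr : (x.1 : ℕ) ≤ r := by have := x.1.isLt; omega
        rcases lt_trichotomy (x.1 : ℕ) j with hmj | hmj | hmj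
        · -- strictly above the pivot: everything vanishes
          rw [coef_zero x (by omega), zero_mul, mul_zero]
          have t1 : ∀ y : BVertex (hatB k) r, ¬ j < (y.1 : ℕ) →
              coef y * Rv k lam (r + 1 - (y.1 : ℕ)) = 0 := by
            intro y hy
            rw [coef_zero y hy, zero_mul]
          have h2 : (x.1 : ℕ) < r := by omega
          rw [dif_pos h2]
          have hsum0 : (∑ c : Fin (hatB k (x.1 : ℕ)),
              coef (extend x h2 c) * Rv k lam (r + 1 - ((extend x h2 c).1 : ℕ))) = 0 :=
            Finset.sum_eq_zero fun c _ => t1 _ (by simp; omega)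
          simp only [depth_extend] at hsum0
          rw [hsum0]
          split_ifs with h1
          · rw [coef_zero (par x) (by simp; omega), zero_mul, zero_add]
          · rw [zero_add]
        · -- at the pivot: signed sum over children cancels
          rw [coef_zero x (by omega), zero_mul, mul_zero]
          have h2 : (x.1 : ℕ) < r := by omega
          rw [dif_pos h2]
          have hsum0 : (∑ c : Fin (hatB k (x.1 : ℕ)),
              coef (extend x h2 c) * Rv k lam (r + 1 - ((extend x h2 c).1 : ℕ))) = 0 := by
            have : ∀ c : Fin (hatB k (x.1 : ℕ)),
                coef (extend x h2 c) * Rv k lam (r + 1 - ((extend x h2 c).1 : ℕ))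
                = (if (∀ i, i < j → letter i x = 0) then sgn (c : ℕ) else 0)
                    * Rv k lam (r - j) := by
              intro c
              rw [coef_ext_mid x h2 c hmj]
              simp only [depth_extend]
              rw [show r + 1 - ((x.1 : ℕ) + 1) = r - j by omega]
            rw [Finset.sum_congr rfl (fun c _ => this c), ← Finset.sum_mul]
            by_cases hp : ∀ i, i < j → letter i x = 0
            · rw [Finset.sum_congr rfl (fun c _ => if_pos hp),
                sgn_sum (hatB_ge_two hk _), zero_mul]
            · rw [Finset.sum_congr rfl (fun c _ => if_neg hp)]
              simp
          simp only [depth_extend] at hsum0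
          rw [hsum0]
          split_ifs with h1
          · rw [coef_zero (par x) (by simp; omega), zero_mul, zero_add]
          · rw [zero_add]
        · -- inside the support
          have h1 : 1 ≤ (x.1 : ℕ) := by omega
          rw [if_pos h1]
          rcases Nat.lt_or_ge (x.1 : ℕ) r with hlt | hge
          · rw [dif_pos hlt]
            have hsum1 : (∑ c : Fin (hatB k (x.1 : ℕ)),
                coef (extend x hlt c) * Rv k lam (r + 1 - ((x.1 : ℕ) + 1)))
                = ((k : ℝ) - 1) * (coef x * Rv k lam (r - (x.1 : ℕ))) := by
              have : ∀ c : Fin (hatB k (x.1 : ℕ)),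
                  coef (extend x hlt c) * Rv k lam (r + 1 - ((x.1 : ℕ) + 1))
                  = coef x * Rv k lam (r - (x.1 : ℕ)) := by
                intro c
                rw [coef_ext x hlt c hmj, show r + 1 - ((x.1 : ℕ) + 1) = r - (x.1 : ℕ) by omega]
              rw [Finset.sum_congr rfl (fun c _ => this c), Finset.sum_const,
                Finset.card_univ, Fintype.card_fin, hatB_of_pos h1, nsmul_eq_mul]
              congr 1
              push_cast [Nat.cast_sub (by omega : 1 ≤ k)]
              ring
            rw [hsum1]
            rcases Nat.lt_or_ge (j + 1) (x.1 : ℕ) with hj1 | hj1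
            · -- deep inside: three-term recurrence
              obtain ⟨n, -⟩ : ∃ n, (x.1 : ℕ) = j + n + 2 := ⟨(x.1 : ℕ) - j - 2, by omega⟩
              rw [coef_par x hj1]
              rw [show r + 1 - ((x.1 : ℕ) - 1) = (r - (x.1 : ℕ)) + 2 by omega,
                show r + 1 - (x.1 : ℕ) = (r - (x.1 : ℕ)) + 1 by omega,
                Rv_rec (r - (x.1 : ℕ))]
              ring
            · -- just below the pivot: uses R_s(lam) = 0
              have hxj : (x.1 : ℕ) = j + 1 := by omega
              rw [coef_zero (par x) (by simp; omega), zero_mul, zero_add]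
              have e1 : r - (x.1 : ℕ) + 2 = s := by omega
              have e2 : r + 1 - (x.1 : ℕ) = r - (x.1 : ℕ) + 1 := by omega
              have := Rv_rec (k := k) (lam := lam) (r - (x.1 : ℕ))
              rw [e1, hs'] at this
              rw [e2]
              have : lam * Rv k lam (r - (x.1 : ℕ) + 1)
                  = ((k : ℝ) - 1) * Rv k lam (r - (x.1 : ℕ)) := by linarith
              linear_combination (-(coef x)) * this
          · -- leaf level
            have hxr' : (x.1 : ℕ) = r := by omega
            rw [dif_neg (by omega), add_zero]
            rcases Nat.lt_or_ge (j + 1) (x.1 : ℕ) with hj1 | hj1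
            · rw [coef_par x hj1]
              rw [show r + 1 - ((x.1 : ℕ) - 1) = 2 by omega,
                show r + 1 - (x.1 : ℕ) = 1 by omega, Rv_two, Rv_one]
              ring
            · -- leaf just below pivot: s = 2 and lam = 0
              have hxj : (x.1 : ℕ) = j + 1 := by omega
              have hs2' : s = 2 := by omega
              have hlam : lam = 0 := by
                have := Rv_two (k := k) (lam := lam)
                rw [← hs2', hs'] at this
                exact this.symm
              rw [coef_zero (par x) (by simp; omega), zero_mul, hlam, zero_mul]
    · -- radial eigenvector
      refine ⟨fun x => Rv k lam (r + 1 - (x.1 : ℕ)), ?_, ?_⟩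
      · intro h0
        have := congrFun h0 (allZero hk r r le_rfl)
        simp only [depth_allZero, Nat.sub_self, Pi.zero_apply] at this
        rw [show r + 1 - r = 1 by omega, Rv_one] at this
        exact one_ne_zero this
      · funext x
        rw [mulVec_apply, Pi.smul_apply, smul_eq_mul]
        have hQ' : lam * Rv k lam (r + 1) - (k : ℝ) * Rv k lam r = 0 := by
          have := hQ
          rw [Polynomial.IsRoot, Qv (by omega)] at this
          simpa using this
        have hxr : (x.1 : ℕ) ≤ r := by have := x.1.isLt; omega
        rcases Nat.eq_zero_or_pos (x.1 : ℕ) with h0 | h1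
        · rw [if_neg (by omega), dif_pos (by omega)]
          simp only [depth_extend, h0]
          rw [show r + 1 - (0 + 1) = r by omega, show r + 1 - 0 = r + 1 by omega]
          rw [Finset.sum_const, Finset.card_univ, Fintype.card_fin, h0, hatB_zero,
            nsmul_eq_mul]
          rw [h0] at *
          linarith
        · rw [if_pos (show 1 ≤ (x.1 : ℕ) from h1)]
          rcases Nat.lt_or_ge (x.1 : ℕ) r with hlt | hge
          · rw [dif_pos hlt]
            obtain ⟨n, hn⟩ : ∃ n, r = (x.1 : ℕ) + n + 1 := ⟨r - (x.1 : ℕ) - 1, by omega⟩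
            simp only [depth_par, depth_extend]
            rw [show r + 1 - ((x.1 : ℕ) - 1) = n + 3 by omega,
              show r + 1 - ((x.1 : ℕ) + 1) = n + 1 by omega,
              show r + 1 - (x.1 : ℕ) = n + 2 by omega]
            rw [Finset.sum_const, Finset.card_univ, Fintype.card_fin, hatB_of_pos h1,
              nsmul_eq_mul]
            rw [Rv_rec (n + 1)]
            push_cast [Nat.cast_sub (by omega : 1 ≤ k)]
            ring
          · have hxr' : (x.1 : ℕ) = r := by omega
            rw [dif_neg (by omega)]
            simp only [depth_par]
            rw [hxr', show r + 1 - (r - 1) = 2 by omega, show r + 1 - r = 1 by omega,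
              Rv_two, Rv_one, add_zero, mul_one]
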